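/- arXiv:1603.08186 — 7 statements merged into one kernel-verified Lean document; each statement's English description precedes it below -/
import Mathlib

section
/- In a category with finite limits, every morphism that is Bourn-normal to some equivalence relation is a monomorphism. -/
open CategoryTheory CategoryTheory.Limits

universe v u

/-- An internal equivalence relation on an object `X` of a finitely complete category. -/
structure InternalEqRel (C : Type u) [Category.{v} C] [HasFiniteLimits C] (X : C) where
  R : C
  r1 : R ⟶ X
  r2 : R ⟶ X
  rel_mono : Mono (prod.lift r1 r2)
  rfl' : X ⟶ R
  rfl_r1 : rfl' ≫ r1 = 𝟙 X
  rfl_r2 : rfl' ≫ r2 = 𝟙 X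
  symm : R ⟶ R
  symm_r1 : symm ≫ r1 = r2
  symm_r2 : symm ≫ r2 = r1
  htrans : pullback r2 r1 ⟶ R
  htrans_r1 : htrans ≫ r1 = pullback.fst r2 r1 ≫ r1
  htrans_r2 : htrans ≫ r2 = pullback.snd r2 r1 ≫ r2

/-- `n` is Bourn-normal to the equivalence relation `E`: `n × n` factors through
`⟨r₁,r₂⟩` via `nt`, and both the square comparing `nt` with `⟨r₁,r₂⟩` over `n × n`
and the square comparing `nt` with `r₁` over `n` (with first projections) are pullbacks. -/
def IsBournNormalTo {C : Type u} [Category.{v} C] [HasFiniteLimits C] {N X : C}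
    (n : N ⟶ X) (E : InternalEqRel C X) : Prop :=
  ∃ nt : N ⨯ N ⟶ E.R,
    IsPullback nt (𝟙 (N ⨯ N)) (prod.lift E.r1 E.r2) (prod.map n n) ∧
    IsPullback nt prod.fst E.r1 n

/-! The first pullback square forces `nt` to send every pair `(a, b)` with `a ≫ n = b ≫ n` to
the reflexivity pair at `a ≫ n`; the second says that a pair is determined by its first
component together with its image under `nt`. Hence `(f, g) = (f, f)` whenever `f ≫ n = g ≫ n`. -/

namespace CategoryTheory.IsPullback

variable {C : Type u} [Category.{v} C]

theorem comp_fst_eq_of_snd_eq_id {P X Z W : C} {fst : P ⟶ X} {f : X ⟶ Z} {g : P ⟶ Z}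
    (h : IsPullback fst (𝟙 P) f g) {m : W ⟶ P} {a : W ⟶ X} (w : a ≫ f = m ≫ g) :
    m ≫ fst = a := by
  have hlift : h.lift a m w = m := by simpa using h.lift_snd a m w
  rw [← hlift, h.lift_fst]

end CategoryTheory.IsPullback

theorem InternalEqRel.prod_lift_comp_eq_rfl_of_isPullback {C : Type u} [Category.{v} C]
    [HasFiniteLimits C] {N X Z : C} {n : N ⟶ X} {E : InternalEqRel C X} {nt : N ⨯ N ⟶ E.R}
    (h : IsPullback nt (𝟙 (N ⨯ N)) (prod.lift E.r1 E.r2) (prod.map n n)) {a b : Z ⟶ N}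
    (hab : a ≫ n = b ≫ n) : prod.lift a b ≫ nt = a ≫ n ≫ E.rfl' :=
  h.comp_fst_eq_of_snd_eq_id (by ext <;> simp [E.rfl_r1, E.rfl_r2, hab])

/-- In a category with finite limits, every morphism that is Bourn-normal to some
equivalence relation is a monomorphism. -/
theorem bournNormal_is_mono {C : Type u} [Category.{v} C] [HasFiniteLimits C]
    {N X : C} (n : N ⟶ X) (E : InternalEqRel C X) (h : IsBournNormalTo n E) :
    Mono n := by
  obtain ⟨nt, hrel, hfst⟩ := h
  refine ⟨fun {Z} f g hfg => ?_⟩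
  have hpair : prod.lift f g = prod.lift f f :=
    hfst.hom_ext
      ((E.prod_lift_comp_eq_rfl_of_isPullback hrel hfg).trans
        (E.prod_lift_comp_eq_rfl_of_isPullback hrel rfl).symm)
      (by rw [prod.lift_fst, prod.lift_fst])
  calc f = prod.lift f f ≫ prod.snd := (prod.lift_snd f f).symm
    _ = prod.lift f g ≫ prod.snd := by rw [hpair]
    _ = g := prod.lift_snd f g
end

section
/- Let I : B → A be a full replete epi-reflective subcategory inclusion with reflection R ⊣ I whose unit η has F-vertical components, where F : A → C is a fibration. Then every F-cartesian morphism of A whose codomain lies in the image of I also lies in the image of I (i.e., is of the form I(κ) for a unique morphism κ of B). -/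
open CategoryTheory

universe v₁ v₂ v₃ u₁ u₂ u₃

/-- A morphism `f : x ⟶ y` is `F`-cartesian (in the strong, Grothendieck-fibration sense):
every `g : z ⟶ y` together with a factorization `w` of `F g` through `F f`
lifts uniquely to a factorization of `g` through `f` lying over `w`. -/
def StronglyCartesian {A : Type u₁} {C : Type u₃} [Category.{v₁} A] [Category.{v₃} C]
    (F : A ⥤ C) {x y : A} (f : x ⟶ y) : Prop :=
  ∀ {z : A} (g : z ⟶ y) (w : F.obj z ⟶ F.obj x),
    w ≫ F.map f = F.map g → ∃! h : z ⟶ x, h ≫ f = g ∧ F.map h = w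

/-- `F` is a (Grothendieck) fibration: every arrow of the base with codomain `F y`
admits a cartesian lift with codomain `y`. -/
def IsFib {A : Type u₁} {C : Type u₃} [Category.{v₁} A] [Category.{v₃} C]
    (F : A ⥤ C) : Prop :=
  ∀ (y : A) (x : C) (f : x ⟶ F.obj y),
    ∃ (z : A) (g : z ⟶ y) (hz : F.obj z = x),
      StronglyCartesian F g ∧ F.map g = eqToHom hz ≫ f


/-- Let `I : B → A` be a full replete epi-reflective subcategory inclusion with reflection
`R ⊣ I` whose unit `η` has `F`-vertical components, where `F : A → C` is a fibration.
Then every `F`-cartesian morphism of `A` whose codomain lies in the image of `I` also lies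
in the image of `I`: it is `I κ` for a unique morphism `κ` of `B`. -/
theorem cartesian_into_image_lies_in_image
    {A : Type u₁} {B : Type u₂} {C : Type u₃}
    [Category.{v₁} A] [Category.{v₂} B] [Category.{v₃} C]
    (F : A ⥤ C) (I : B ⥤ A) (R : A ⥤ B) (adj : R ⊣ I)
    [I.Full] [I.Faithful]
    (hrep : ∀ {a : A} {b : B}, (I.obj b ≅ a) → ∃ b' : B, I.obj b' = a)
    (hepi : ∀ a : A, Epi (adj.unit.app a))
    (hobj : ∀ a : A, F.obj a = F.obj (I.obj (R.obj a)))
    (hver : ∀ a : A, F.map (adj.unit.app a) = eqToHom (hobj a))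
    (hfib : IsFib F)
    {a : A} {b : B} (κbar : a ⟶ I.obj b) (hc : StronglyCartesian F κbar) :
    ∃ (b' : B) (e : I.obj b' = a), ∃! κ : b' ⟶ b, I.map κ = eqToHom e ≫ κbar := by
  set η := adj.unit.app a with hη
  set t : I.obj (R.obj a) ⟶ I.obj b := I.map ((adj.homEquiv a b).symm κbar) with ht
  have hfac : η ≫ t = κbar := by
    have h1 := (adj.homEquiv a b).apply_symm_apply κbar
    rw [Adjunction.homEquiv_unit] at h1
    simpa [ht, hη] using h1
  have hw : (eqToHom (hobj a).symm) ≫ F.map κbar = F.map t := by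
    have h2 : F.map η ≫ F.map t = F.map κbar := by rw [← F.map_comp, hfac]
    rw [hver a] at h2
    rw [← h2]; simp
  obtain ⟨h, ⟨hh1, hh2⟩, huniq⟩ := hc t (eqToHom (hobj a).symm) hw
  have hsec : η ≫ h = 𝟙 a := by
    obtain ⟨k, ⟨hk1, hk2⟩, kuniq⟩ := hc κbar (𝟙 _) (by simp)
    have e1 : η ≫ h = k := kuniq _ ⟨by rw [Category.assoc, hh1, hfac],
      by rw [F.map_comp, hη, hver a, hh2]; simp⟩
    have e2 : 𝟙 a = k := kuniq _ ⟨by simp, by simp⟩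
    rw [e1, ← e2]
  have hret : h ≫ η = 𝟙 _ := by
    have := hepi a
    have h3 : adj.unit.app a ≫ h ≫ adj.unit.app a = adj.unit.app a ≫ 𝟙 _ := by
      rw [← Category.assoc, ← hη, hsec]; simp
    exact (cancel_epi (adj.unit.app a)).mp h3
  obtain ⟨b', hb'⟩ := hrep ⟨h, η, hret, hsec⟩
  refine ⟨b', hb', I.preimage (eqToHom hb' ≫ κbar), by simp, ?_⟩
  intro κ' hκ'
  apply I.map_injective
  rw [hκ']; simp
end

section
/- Let I : B → A be a full replete epi-reflective subcategory with reflection R ⊣ I whose unit components are F-vertical, where F : A → C is a fibration. Then the composite F∘I : B → C is a fibration, and its cartesian lifts are (the restrictions of) the F-cartesian lifts. -/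
open CategoryTheory

universe v₁ v₂ v₃ u₁ u₂ u₃

/-- Let `I : B → A` be a full replete epi-reflective subcategory with reflection `R ⊣ I`
whose unit components are `F`-vertical, where `F : A → C` is a fibration. Then `F ∘ I` is a
fibration, and its cartesian lifts are the restrictions of `F`-cartesian lifts. -/
theorem comp_isFib_of_epireflective
    {A : Type u₁} {B : Type u₂} {C : Type u₃}
    [Category.{v₁} A] [Category.{v₂} B] [Category.{v₃} C]
    (F : A ⥤ C) (I : B ⥤ A) (R : A ⥤ B) (adj : R ⊣ I)
    [I.Full] [I.Faithful]
    (hrep : ∀ {a : A} {b : B}, (I.obj b ≅ a) → ∃ b' : B, I.obj b' = a)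
    (hepi : ∀ a : A, Epi (adj.unit.app a))
    (hobj : ∀ a : A, F.obj a = F.obj (I.obj (R.obj a)))
    (hver : ∀ a : A, F.map (adj.unit.app a) = eqToHom (hobj a))
    (hfib : IsFib F) :
    IsFib (I ⋙ F) ∧
      ∀ (b : B) (x : C) (f : x ⟶ F.obj (I.obj b)),
        ∃ (b' : B) (κ : b' ⟶ b) (h : F.obj (I.obj b') = x),
          StronglyCartesian (I ⋙ F) κ ∧ StronglyCartesian F (I.map κ) ∧
          F.map (I.map κ) = eqToHom h ≫ f := by
  have key : ∀ (b : B) (x : C) (f : x ⟶ F.obj (I.obj b)),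
      ∃ (b' : B) (κ : b' ⟶ b) (h : F.obj (I.obj b') = x),
        StronglyCartesian (I ⋙ F) κ ∧ StronglyCartesian F (I.map κ) ∧
        F.map (I.map κ) = eqToHom h ≫ f := by
    intro b x f
    obtain ⟨z, g, hz, hg, hFg⟩ := hfib (I.obj b) x f
    -- the transpose of `g`
    set gb : R.obj z ⟶ b := (adj.homEquiv z b).symm g with hgb
    have hfac : adj.unit.app z ≫ I.map gb = g := by
      have := (adj.homEquiv z b).apply_symm_apply g
      rwa [Adjunction.homEquiv_unit] at this
    -- `F.map g = eqToHom ≫ F.map (I.map gb)`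
    have hFfac : eqToHom (hobj z).symm ≫ F.map g = F.map (I.map gb) := by
      rw [← hfac, F.map_comp, hver z, ← Category.assoc, eqToHom_trans, eqToHom_refl,
        Category.id_comp]
    -- a retraction of the unit, via cartesianness of `g`
    obtain ⟨r, ⟨hr1, hr2⟩, -⟩ := hg (I.map gb) (eqToHom (hobj z).symm) hFfac
    have hsplit : adj.unit.app z ≫ r = 𝟙 z := by
      obtain ⟨u, -, huniq⟩ := hg g (𝟙 _) (by simp)
      have h1 := huniq (adj.unit.app z ≫ r) ⟨by rw [Category.assoc, hr1, hfac],
        by rw [F.map_comp, hver z, hr2, eqToHom_trans, eqToHom_refl]⟩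
      have h2 := huniq (𝟙 z) ⟨by simp, by simp⟩
      rw [h1, h2]
    have hretr : r ≫ adj.unit.app z = 𝟙 _ := by
      have := hepi z
      rw [← cancel_epi (adj.unit.app z), ← Category.assoc, hsplit]
      simp
    have : IsIso (adj.unit.app z) := ⟨r, hsplit, hretr⟩
    obtain ⟨b', hb'⟩ := hrep (asIso (adj.unit.app z)).symm
    subst hb'
    refine ⟨b', I.preimage g, hz, ?_, ?_, ?_⟩
    · -- StronglyCartesian (I ⋙ F)
      intro z₂ g₂ w hw
      have hw' : w ≫ F.map g = F.map (I.map g₂) := by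
        simpa [Functor.map_preimage] using hw
      obtain ⟨h, ⟨h1, h2⟩, huniq⟩ := hg (I.map g₂) w hw'
      refine ⟨I.preimage h, ⟨?_, ?_⟩, ?_⟩
      · apply I.map_injective
        simp only [Functor.map_comp, Functor.map_preimage]
        exact h1
      · show F.map (I.map (I.preimage h)) = w
        rw [Functor.map_preimage]; exact h2
      · rintro y ⟨hy1, hy2⟩
        apply I.map_injective
        rw [Functor.map_preimage]
        refine huniq (I.map y) ⟨?_, ?_⟩
        · have := congrArg I.map hy1
          rwa [Functor.map_comp, Functor.map_preimage] at this
        · exact hy2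
    · rw [Functor.map_preimage]; exact hg
    · rw [Functor.map_preimage]; exact hFg
  refine ⟨?_, key⟩
  intro y x f
  obtain ⟨b', κ, h, c1, -, heq⟩ := key y x f
  exact ⟨b', κ, h, c1, heq⟩
end

section
/- Let I : B → A be a full replete epi-reflective subcategory with reflection R ⊣ I whose unit components are F-vertical, where F : A → C is a fibration. Then I is a cartesian functor over C: it sends (F∘I)-cartesian morphisms of B to F-cartesian morphisms of A. -/
open CategoryTheory

universe v₁ v₂ v₃ u₁ u₂ u₃

/-- Let `I : B → A` be a full replete epi-reflective subcategory with reflection `R ⊣ I`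
whose unit components are `F`-vertical, where `F : A → C` is a fibration. Then `I` is a
cartesian functor over `C`: it sends `(F∘I)`-cartesian morphisms of `B` to `F`-cartesian
morphisms of `A`. -/
theorem inclusion_is_cartesian_functor
    {A : Type u₁} {B : Type u₂} {C : Type u₃}
    [Category.{v₁} A] [Category.{v₂} B] [Category.{v₃} C]
    (F : A ⥤ C) (I : B ⥤ A) (R : A ⥤ B) (adj : R ⊣ I)
    [I.Full] [I.Faithful]
    (hrep : ∀ {a : A} {b : B}, (I.obj b ≅ a) → ∃ b' : B, I.obj b' = a)
    (hepi : ∀ a : A, Epi (adj.unit.app a))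
    (hobj : ∀ a : A, F.obj a = F.obj (I.obj (R.obj a)))
    (hver : ∀ a : A, F.map (adj.unit.app a) = eqToHom (hobj a))
    (hfib : IsFib F) :
    ∀ {b b' : B} (κ : b' ⟶ b),
      StronglyCartesian (I ⋙ F) κ → StronglyCartesian F (I.map κ) := by
  intro b b' κ hκ z g w hw
  set η := adj.unit.app z with hη
  let g' : R.obj z ⟶ b := (adj.homEquiv z b).symm g
  have hg : η ≫ I.map g' = g := by
    have := (adj.homEquiv z b).apply_symm_apply g
    rwa [Adjunction.homEquiv_unit] at this
  have hFg' : F.map (I.map g') = eqToHom (hobj z).symm ≫ F.map g := by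
    have := congrArg F.map hg
    rw [F.map_comp, hver z] at this
    rw [← this, ← Category.assoc, eqToHom_trans, eqToHom_refl, Category.id_comp]
  let w' : (I ⋙ F).obj (R.obj z) ⟶ (I ⋙ F).obj b' := eqToHom (hobj z).symm ≫ w
  have hw' : w' ≫ (I ⋙ F).map κ = (I ⋙ F).map g' := by
    show (eqToHom (hobj z).symm ≫ w) ≫ F.map (I.map κ) = F.map (I.map g')
    rw [Category.assoc, hw, hFg']
  obtain ⟨h', ⟨hc, hm⟩, huniq⟩ := hκ g' w' hw'
  refine ⟨η ≫ I.map h', ⟨?_, ?_⟩, ?_⟩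
  · rw [Category.assoc, ← I.map_comp, hc, hg]
  · rw [F.map_comp, hver z]
    have : F.map (I.map h') = w' := hm
    rw [this]
    simp [w']
  · rintro h₂ ⟨h₂c, h₂m⟩
    let h₂' : R.obj z ⟶ b' := (adj.homEquiv z b').symm h₂
    have hg2 : η ≫ I.map h₂' = h₂ := by
      have := (adj.homEquiv z b').apply_symm_apply h₂
      rwa [Adjunction.homEquiv_unit] at this
    have e1 : h₂' ≫ κ = g' := by
      apply I.map_injective
      have : η ≫ I.map (h₂' ≫ κ) = η ≫ I.map g' := by
        rw [I.map_comp, ← Category.assoc, hg2, h₂c, hg]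
      exact (cancel_epi η).mp this
    have e2 : (I ⋙ F).map h₂' = w' := by
      have := congrArg F.map hg2
      rw [F.map_comp, hver z, h₂m] at this
      show F.map (I.map h₂') = eqToHom (hobj z).symm ≫ w
      rw [← this, ← Category.assoc, eqToHom_trans, eqToHom_refl, Category.id_comp]
    have : h₂' = h' := huniq h₂' ⟨e1, e2⟩
    rw [← hg2, this]
end

section
/- Let I : B → A be a full replete epi-reflective subcategory with reflection R ⊣ I whose unit components are F-vertical, where F : A → C is an opfibration. Then F∘I : B → C is an opfibration, with opcartesian lift of an arrow γ : F(I(b)) → c at b given by composing the F-opcartesian lift μ̄ : I(b) → a of γ with the unit η_a and transposing across the adjunction. -/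
open CategoryTheory

universe v₁ v₂ v₃ u₁ u₂ u₃

/-- A morphism `f : x ⟶ y` is `F`-opcartesian (in the strong sense): every `g : x ⟶ z`
together with a factorization `w` of `F g` through `F f` lifts uniquely to a
factorization of `g` through `f` lying over `w`. -/
def StronglyOpcartesian {A : Type u₁} {C : Type u₃} [Category.{v₁} A] [Category.{v₃} C]
    (F : A ⥤ C) {x y : A} (f : x ⟶ y) : Prop :=
  ∀ {z : A} (g : x ⟶ z) (w : F.obj y ⟶ F.obj z),
    F.map f ≫ w = F.map g → ∃! h : y ⟶ z, f ≫ h = g ∧ F.map h = w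

/-- `F` is a (Grothendieck) opfibration: every arrow of the base with domain `F x`
admits an opcartesian lift with domain `x`. -/
def IsOpfib {A : Type u₁} {C : Type u₃} [Category.{v₁} A] [Category.{v₃} C]
    (F : A ⥤ C) : Prop :=
  ∀ (x : A) (y : C) (f : F.obj x ⟶ y),
    ∃ (z : A) (g : x ⟶ z) (hz : F.obj z = y),
      StronglyOpcartesian F g ∧ F.map g = f ≫ eqToHom hz.symm


/-- Let `I : B → A` be a full replete epi-reflective subcategory with reflection `R ⊣ I`
whose unit components are `F`-vertical, where `F : A → C` is an opfibration.
Then `F ∘ I` is an opfibration, and the opcartesian lift of an arrow at `b` is obtained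
by composing the `F`-opcartesian lift `μ̄ : I b ⟶ a` with the unit `η_a` and transposing
across the adjunction (i.e. it is the unique `μ` with `I μ = μ̄ ≫ η_a`). -/
theorem comp_isOpfib_of_epireflective
    {A : Type u₁} {B : Type u₂} {C : Type u₃}
    [Category.{v₁} A] [Category.{v₂} B] [Category.{v₃} C]
    (F : A ⥤ C) (I : B ⥤ A) (R : A ⥤ B) (adj : R ⊣ I)
    [I.Full] [I.Faithful]
    (hrep : ∀ {a : A} {b : B}, (I.obj b ≅ a) → ∃ b' : B, I.obj b' = a)
    (hepi : ∀ a : A, Epi (adj.unit.app a))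
    (hobj : ∀ a : A, F.obj a = F.obj (I.obj (R.obj a)))
    (hver : ∀ a : A, F.map (adj.unit.app a) = eqToHom (hobj a))
    (hopfib : IsOpfib F) :
    IsOpfib (I ⋙ F) ∧
      ∀ {b : B} {a : A} (μbar : I.obj b ⟶ a), StronglyOpcartesian F μbar →
        StronglyOpcartesian (I ⋙ F) (I.preimage (μbar ≫ adj.unit.app a)) := by
  have key : ∀ {b : B} {a : A} (μbar : I.obj b ⟶ a), StronglyOpcartesian F μbar →
      StronglyOpcartesian (I ⋙ F) (I.preimage (μbar ≫ adj.unit.app a)) := by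
    intro b a μbar hcart z g w hw
    set μ := I.preimage (μbar ≫ adj.unit.app a) with hμ
    have hIμ : I.map μ = μbar ≫ adj.unit.app a := I.map_preimage _
    have hw' : F.map μbar ≫ (eqToHom (hobj a) ≫ w) = F.map (I.map g) := by
      have : F.map (I.map μ) ≫ w = F.map (I.map g) := hw
      rw [hIμ, F.map_comp, hver a] at this
      simpa using this
    obtain ⟨h, ⟨hfac, hover⟩, huniq⟩ := hcart (I.map g) (eqToHom (hobj a) ≫ w) hw'
    refine ⟨(adj.homEquiv a z).symm h, ⟨?_, ?_⟩, ?_⟩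
    · have hk : adj.unit.app a ≫ I.map ((adj.homEquiv a z).symm h) = h := by
        have h2 := (adj.homEquiv a z).apply_symm_apply h
        rwa [Adjunction.homEquiv_unit] at h2
      apply I.map_injective
      rw [I.map_comp, hIμ, Category.assoc, hk, hfac]
    · have hk : adj.unit.app a ≫ I.map ((adj.homEquiv a z).symm h) = h := by
        have h2 := (adj.homEquiv a z).apply_symm_apply h
        rwa [Adjunction.homEquiv_unit] at h2
      have : F.map (adj.unit.app a) ≫ F.map (I.map ((adj.homEquiv a z).symm h))
          = eqToHom (hobj a) ≫ w := by
        rw [← F.map_comp, hk, hover]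
      rw [hver a] at this
      exact (cancel_epi (eqToHom (hobj a))).mp this
    · intro k ⟨hk1, hk2⟩
      have hh : adj.unit.app a ≫ I.map k = h := by
        apply huniq
        constructor
        · rw [← Category.assoc, ← hIμ, ← I.map_comp, hk1]
        · rw [F.map_comp, hver a]
          simp only [Functor.comp_map] at hk2
          rw [hk2]
      have hk : adj.unit.app a ≫ I.map ((adj.homEquiv a z).symm h) = h := by
        have h2 := (adj.homEquiv a z).apply_symm_apply h
        rwa [Adjunction.homEquiv_unit] at h2
      apply I.map_injective
      have := hepi a
      exact (cancel_epi (adj.unit.app a)).mp (hh.trans hk.symm)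
  refine ⟨?_, key⟩
  intro b y f
  obtain ⟨a, μbar, hz, hcart, hmap⟩ := hopfib (I.obj b) y f
  refine ⟨R.obj a, I.preimage (μbar ≫ adj.unit.app a), (hobj a).symm.trans hz, key μbar hcart, ?_⟩
  show F.map (I.map _) = _
  rw [I.map_preimage, F.map_comp, hver a, hmap]
  simp
end

section
/- Let I : B → A be a full replete epi-reflective subcategory with reflection R ⊣ I whose unit components are F-vertical, where F : A → C is an opfibration. Then the reflector R is an opcartesian functor over C: for every F-opcartesian morphism μ : a → a' in A, the morphism R(μ) is (F∘I)-opcartesian over F(μ). -/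
open CategoryTheory

universe v₁ v₂ v₃ u₁ u₂ u₃

/-- Let `I : B → A` be a full replete epi-reflective subcategory with reflection `R ⊣ I`
whose unit components are `F`-vertical, where `F : A → C` is an opfibration. Then the
reflector `R` is an opcartesian functor over `C`: for every `F`-opcartesian morphism
`μ : a ⟶ a'` of `A`, the morphism `R μ` is `(F∘I)`-opcartesian over `F μ`. -/
theorem reflector_is_opcartesian_functor
    {A : Type u₁} {B : Type u₂} {C : Type u₃}
    [Category.{v₁} A] [Category.{v₂} B] [Category.{v₃} C]
    (F : A ⥤ C) (I : B ⥤ A) (R : A ⥤ B) (adj : R ⊣ I)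
    [I.Full] [I.Faithful]
    (hrep : ∀ {a : A} {b : B}, (I.obj b ≅ a) → ∃ b' : B, I.obj b' = a)
    (hepi : ∀ a : A, Epi (adj.unit.app a))
    (hobj : ∀ a : A, F.obj a = F.obj (I.obj (R.obj a)))
    (hver : ∀ a : A, F.map (adj.unit.app a) = eqToHom (hobj a))
    (hopfib : IsOpfib F) :
    ∀ {a a' : A} (μ : a ⟶ a'), StronglyOpcartesian F μ →
      StronglyOpcartesian (I ⋙ F) (R.map μ) ∧
      F.map (I.map (R.map μ)) = eqToHom (hobj a).symm ≫ F.map μ ≫ eqToHom (hobj a') := by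
  intro a a' μ hμ
  have hnat : adj.unit.app a ≫ I.map (R.map μ) = μ ≫ adj.unit.app a' := by
    simpa using (adj.unit.naturality μ).symm
  have hF : F.map (I.map (R.map μ)) = eqToHom (hobj a).symm ≫ F.map μ ≫ eqToHom (hobj a') := by
    have h1 := congrArg F.map hnat
    simp only [F.map_comp, hver] at h1
    rw [← h1]
    simp
  refine ⟨?_, hF⟩
  intro z g w hw
  simp only [Functor.comp_map] at hw
  have hw' : F.map μ ≫ (eqToHom (hobj a') ≫ w) = F.map (adj.unit.app a ≫ I.map g) := by
    have : F.map μ ≫ eqToHom (hobj a') ≫ w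
        = eqToHom (hobj a) ≫ (F.map (I.map (R.map μ)) ≫ w) := by
      rw [hF]; simp
    rw [this, hw]
    simp [hver]
  obtain ⟨h, ⟨hcomm, hover⟩, huniq⟩ :=
    hμ (adj.unit.app a ≫ I.map g) (eqToHom (hobj a') ≫ w) hw'
  set k := (adj.homEquiv a' z).symm h with hk
  have hkfact : adj.unit.app a' ≫ I.map k = h := by
    have := (adj.homEquiv a' z).apply_symm_apply h
    rw [Adjunction.homEquiv_unit] at this
    simpa [hk] using this
  have hRk : R.map μ ≫ k = g := by
    apply I.map_injective
    have : adj.unit.app a ≫ I.map (R.map μ ≫ k) = adj.unit.app a ≫ I.map g := by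
      rw [I.map_comp, ← Category.assoc, hnat, Category.assoc, hkfact, hcomm]
    exact (cancel_epi (adj.unit.app a)).mp this
  have hFk : F.map (I.map k) = w := by
    have h2 := congrArg F.map hkfact
    rw [F.map_comp, hver, hover] at h2
    exact (cancel_epi (eqToHom (hobj a'))).mp h2
  refine ⟨k, ⟨hRk, hFk⟩, ?_⟩
  intro k' ⟨hk'1, hk'2⟩
  simp only [Functor.comp_map] at hk'2
  have hh' : adj.unit.app a' ≫ I.map k' = h := by
    apply huniq
    constructor
    · rw [← Category.assoc, ← hnat, Category.assoc, ← I.map_comp, hk'1]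
    · rw [F.map_comp, hver, hk'2]
  apply I.map_injective
  apply (cancel_epi (adj.unit.app a')).mp
  rw [hh', hkfact]
end

section
/- In the category of groups, for a normal subgroup inclusion n : N ↪ X, the image of the canonical homomorphism from the amalgamated free product (N × N) *_N X to X × X (sending (n,n') to (n,n') and x to (x,x)) equals the kernel pair relation of the quotient map X → X/N, i.e., {(a,b) ∈ X × X : a⁻¹b ∈ N}. -/
universe u

/-- The kernel pair relation of the quotient map `X → X/N` as a subgroup of `X × X`. -/
def kernelPairSubgroup {X : Type u} [Group X] (N : Subgroup X) [N.Normal] :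
    Subgroup (X × X) where
  carrier := {p | p.1⁻¹ * p.2 ∈ N}
  one_mem' := by simpa using one_mem N
  mul_mem' := by
    rintro ⟨a1, b1⟩ ⟨a2, b2⟩ h1 h2
    simp only [Set.mem_setOf_eq, Prod.fst_mul, Prod.snd_mul, mul_inv_rev] at *
    have key : a2⁻¹ * a1⁻¹ * (b1 * b2)
        = (a2⁻¹ * (a1⁻¹ * b1) * a2) * (a2⁻¹ * b2) := by group
    rw [key]
    exact mul_mem (Subgroup.Normal.conj_mem' ‹N.Normal› _ h1 _) h2
  inv_mem' := by
    rintro ⟨a, b⟩ h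
    simp only [Set.mem_setOf_eq, Prod.fst_inv, Prod.snd_inv, inv_inv] at *
    have key : a * b⁻¹ = a * (a⁻¹ * b)⁻¹ * a⁻¹ := by group
    rw [key]
    exact Subgroup.Normal.conj_mem ‹N.Normal› _ (inv_mem h) _

/-- In the category of groups, let `N` be a normal subgroup of `X` and let `G`, together
with `i₁ : N × N →* G` and `i₂ : X →* G`, be the amalgamated free product
`(N × N) *_N X`, i.e. the pushout of the diagonal `N →* N × N` along the inclusion
`N →* X` (expressed by its universal property).  Then the range of the canonical
homomorphism `c : G →* X × X` (determined by sending `(n, n')` to `(n, n')` and `x` to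
`(x, x)`) is exactly the kernel pair relation of the quotient map `X → X/N`, namely
`{(a, b) : a⁻¹ * b ∈ N}`. -/
theorem range_amalgamated_comparison_eq_kernelPair
    {X : Type u} [Group X] (N : Subgroup X) [N.Normal]
    (G : Type u) [Group G] (i1 : N × N →* G) (i2 : X →* G)
    (hcomm : ∀ n : N, i1 (n, n) = i2 (n : X))
    (huniv : ∀ (H : Type u) [Group H] (j1 : N × N →* H) (j2 : X →* H),
      (∀ n : N, j1 (n, n) = j2 (n : X)) →
      ∃! k : G →* H, k.comp i1 = j1 ∧ k.comp i2 = j2)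
    (c : G →* X × X)
    (hc1 : c.comp i1 = N.subtype.prodMap N.subtype)
    (hc2 : c.comp i2 = (MonoidHom.id X).prod (MonoidHom.id X)) :
    ∀ p : X × X, p ∈ c.range ↔ p.1⁻¹ * p.2 ∈ N := by
  set S := kernelPairSubgroup N with hS
  -- maps into S
  have hmem1 : ∀ q : N × N, ((q.1 : X), (q.2 : X)) ∈ S := by
    intro q
    show (q.1 : X)⁻¹ * (q.2 : X) ∈ N
    exact mul_mem (inv_mem q.1.2) q.2.2
  have hmem2 : ∀ x : X, (x, x) ∈ S := by
    intro x
    show x⁻¹ * x ∈ N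
    simpa using one_mem N
  let j1 : N × N →* S :=
    (N.subtype.prodMap N.subtype).codRestrict S (fun q => hmem1 q)
  let j2 : X →* S :=
    ((MonoidHom.id X).prod (MonoidHom.id X)).codRestrict S (fun x => hmem2 x)
  have hj : ∀ n : N, j1 (n, n) = j2 (n : X) := by
    intro n; rfl
  obtain ⟨k, ⟨hk1, hk2⟩, -⟩ := huniv S j1 j2 hj
  -- uniqueness at X × X forces c = S.subtype.comp k
  obtain ⟨k', -, huniq⟩ := huniv (X × X) (N.subtype.prodMap N.subtype)
      ((MonoidHom.id X).prod (MonoidHom.id X)) (by intro n; rfl)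
  have hck : c = S.subtype.comp k := by
    have h1 : c = k' := huniq c ⟨hc1, hc2⟩
    have h2 : S.subtype.comp k = k' := by
      apply huniq
      constructor
      · rw [MonoidHom.comp_assoc, hk1]; rfl
      · rw [MonoidHom.comp_assoc, hk2]; rfl
    rw [h1, h2]
  intro p
  constructor
  · rintro ⟨g, rfl⟩
    rw [hck]
    exact (k g).2
  · intro hp
    refine ⟨i2 p.1 * i1 (1, ⟨p.1⁻¹ * p.2, hp⟩), ?_⟩
    have e1 : c (i2 p.1) = (p.1, p.1) := by
      have := congrArg (fun f => (f : X →* X × X) p.1) hc2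
      simpa using this
    have e2 : c (i1 (1, ⟨p.1⁻¹ * p.2, hp⟩)) = (1, p.1⁻¹ * p.2) := by
      have := congrArg (fun f => (f : N × N →* X × X) (1, ⟨p.1⁻¹ * p.2, hp⟩)) hc1
      simpa using this
    rw [map_mul, e1, e2]
    ext <;> simp
end
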